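/- Let 0 < a < b, c > 0 and μ ≥ 0. Then the improper integral R_μ(a,b;c) = ∫_c^∞ x I_μ(ax) K_μ(bx) dx converges and equals (ac I_{μ+1}(ac) K_μ(bc) + bc I_μ(ac) K_{μ+1}(bc)) / (b² − a²). -/

import Mathlib

open MeasureTheory ProbabilityTheory Real Filter Set
open scoped ENNReal NNReal Topology

/-- Modified Bessel function of the first kind `I_μ(x)`, defined by its series. -/
noncomputable def besselI (μ x : ℝ) : ℝ :=
  ∑' k : ℕ, (x / 2) ^ (2 * (k : ℝ) + μ) / ((k.factorial : ℝ) * Real.Gamma ((k : ℝ) + μ + 1))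

/-- Macdonald function (modified Bessel function of the second kind) `K_μ(x)`. -/
noncomputable def besselK (μ x : ℝ) : ℝ :=
  ∫ t in Set.Ioi (0 : ℝ), Real.exp (-(x * Real.cosh t)) * Real.cosh (μ * t)

/-- `S_m = 2 π^{(m+1)/2} / Γ((m+1)/2)`, the surface area of the `m`-dimensional unit sphere. -/
noncomputable def sphereArea (m : ℕ) : ℝ :=
  2 * Real.pi ^ (((m : ℝ) + 1) / 2) / Real.Gamma (((m : ℝ) + 1) / 2)

/-- The coefficient `ξ_{μ,n}(y)`. -/
noncomputable def xiCoef (μ : ℝ) (n : ℕ) (y : ℝ) : ℝ :=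
  if μ = 0 ∧ n = 0 then besselI 0 y ^ 2 / 2
  else (-1 : ℝ) ^ n * (μ + n) * Real.Gamma (2 * μ + n) * besselI (μ + n) y ^ 2
    / (n.factorial : ℝ)

/-- The coefficient `ζ_{μ,n}(y)`. -/
noncomputable def zetaCoef (μ : ℝ) (n : ℕ) (y : ℝ) : ℝ :=
  if μ = 0 ∧ n = 0 then besselI 0 y * besselI 1 y / 2
  else (-1 : ℝ) ^ n * (μ + n) * Real.Gamma (2 * μ + n) * besselI (μ + n) y
    * besselI (μ + n + 1) y / (n.factorial : ℝ)

/-- A standard `d`-dimensional Brownian motion on a probability space `(Ω, P)`. -/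
structure IsBrownianMotion {Ω : Type*} [MeasurableSpace Ω] (P : Measure Ω) (d : ℕ)
    (B : ℝ → Ω → EuclideanSpace ℝ (Fin d)) : Prop where
  isProb : IsProbabilityMeasure P
  meas : ∀ t : ℝ, Measurable (B t)
  cont : ∀ᵐ ω ∂P, Continuous fun t : ℝ => B t ω
  init : ∀ᵐ ω ∂P, B 0 ω = 0
  indep_incr : ∀ (n : ℕ) (t : Fin (n + 1) → ℝ), Monotone t → (∀ i, 0 ≤ t i) →
    iIndepFun
      (fun i : Fin n => fun ω => B (t i.succ) ω - B (t i.castSucc) ω) P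
  gauss_coord : ∀ s t : ℝ, 0 ≤ s → s ≤ t → ∀ i : Fin d,
    Measure.map (fun ω => (B t ω - B s ω) i) P = gaussianReal 0 (Real.toNNReal (t - s))
  indep_coord : ∀ s t : ℝ, 0 ≤ s → s ≤ t →
    iIndepFun
      (fun (i : Fin d) (ω : Ω) => (B t ω - B s ω) i) P

/-- Hitting time of the closed ball of radius `r` by the drifted process `B(s)+sv` started
shifted by `x`. -/
noncomputable def hitTime {Ω : Type*} {d : ℕ} (B : ℝ → Ω → EuclideanSpace ℝ (Fin d))
    (v x : EuclideanSpace ℝ (Fin d)) (r : ℝ) (ω : Ω) : ℝ :=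
  sInf {s : ℝ | 0 ≤ s ∧ ‖B s ω + s • v + x‖ ≤ r}

/-- `L_v^d(t) = ∫_{ℝ^d ∖ D} P(τ_v(x) ≤ t) dx`. -/
noncomputable def sausageL {Ω : Type*} [MeasurableSpace Ω] (P : Measure Ω) {d : ℕ}
    (B : ℝ → Ω → EuclideanSpace ℝ (Fin d)) (v : EuclideanSpace ℝ (Fin d)) (r t : ℝ) : ℝ :=
  ∫ x in (Metric.closedBall (0 : EuclideanSpace ℝ (Fin d)) r)ᶜ,
    (P {ω | hitTime B v x r ω ≤ t}).toReal

/-- `Σ_v^m(t) = e^{-|v|² t / 2} L_0^m(t)`, where `L0` stands for `L_0^m`. -/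
noncomputable def sigmaV (vnorm : ℝ) (L0 : ℝ → ℝ) (t : ℝ) : ℝ :=
  Real.exp (-(vnorm ^ 2 * t / 2)) * L0 t

/-- `Σ̃_v^m(t)`. -/
noncomputable def sigmaTilde (vnorm : ℝ) (L0 : ℝ → ℝ) (t : ℝ) : ℝ :=
  sigmaV vnorm L0 t + vnorm ^ 2 * ∫ s in (0:ℝ)..t, sigmaV vnorm L0 s
    + vnorm ^ 4 / 4 * ∫ s in (0:ℝ)..t, (t - s) * sigmaV vnorm L0 s

/-- The function `F_μ(λ)` (depending on `|v|` and `r`). -/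
noncomputable def Fmu (vnorm r μ lam : ℝ) : ℝ :=
  Real.sqrt (2 * lam + vnorm ^ 2) / lam ^ 2
    * besselK (μ + 1) (r * Real.sqrt (2 * lam + vnorm ^ 2))
    / besselK μ (r * Real.sqrt (2 * lam + vnorm ^ 2))

/-- The Gegenbauer polynomial `C_n^μ(x)` for `μ > 0`. -/
noncomputable def gegenbauerC (μ : ℝ) (n : ℕ) (x : ℝ) : ℝ :=
  (1 / Real.Gamma μ) * ∑ m ∈ Finset.range (n / 2 + 1),
    (-1 : ℝ) ^ m * Real.Gamma (μ + n - m) / ((m.factorial : ℝ) * ((n - 2 * m).factorial : ℝ))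
      * (2 * x) ^ (n - 2 * m)

/-- The constant `N_v^d` (as a function of `|v|`), the linear growth rate of the expected
volume of the Wiener sausage with drift. -/
noncomputable def NvD (d : ℕ) (r y : ℝ) : ℝ :=
  if d = 2 then
    Real.pi * besselI 0 (r * y) / besselK 0 (r * y)
      + 2 * Real.pi * ∑' n : ℕ,
        (-1 : ℝ) ^ (n + 1) * besselI ((n : ℝ) + 1) (r * y) / besselK ((n : ℝ) + 1) (r * y)
  else
    Real.pi * sphereArea (d - 2) / y ^ ((d : ℝ) - 2) * ∑' n : ℕ,
      (-1 : ℝ) ^ n * (((d : ℝ) / 2 - 1) + n) * Real.Gamma (2 * ((d : ℝ) / 2 - 1) + n)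
        / (n.factorial : ℝ)
        * besselI (((d : ℝ) / 2 - 1) + n) (r * y) / besselK (((d : ℝ) / 2 - 1) + n) (r * y)

/-! For `f x = I_μ (a x)` and `g x = K_μ (b x)`, which solve the modified Bessel equations with
scales `a` and `b`, the Lommel expression `W x = x (f' x g x - f x g' x)` satisfies
`W' x = (a² - b²) x f x g x`. By the recurrences `I_μ' = I_{μ+1} + (μ/x) I_μ` and
`K_μ' = (μ/x) K_μ - K_{μ+1}`, `W` is `lommelIK μ a b`, the numerator of the claimed value.
The bounds `I_ν(y) ≤ (y/2)^ν e^y / Γ(ν+1)` and `K_ν(y) ≤ e^{b-y} K_ν(b)` for `y ≥ b` give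
`W x → 0` because `a < b`. As the integrand is nonnegative, the fundamental theorem of calculus
on `(c, ∞)` gives both integrability and the value `W c / (b² - a²)`.
-/

lemma sq_div_four_le_cosh (t : ℝ) : t ^ 2 / 4 ≤ cosh t := by
  rw [← cosh_abs, cosh_eq]
  have := quadratic_le_exp_of_nonneg (abs_nonneg t)
  have := exp_pos (-|t|)
  nlinarith [sq_abs t, abs_nonneg t]

lemma cosh_le_exp_abs (u : ℝ) : cosh u ≤ exp |u| := by
  rw [← cosh_abs, cosh_eq]
  linarith [exp_le_exp.2 (neg_le_self (abs_nonneg u))]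

lemma abs_sinh_le_exp_abs (u : ℝ) : |sinh u| ≤ exp |u| := by
  rw [abs_sinh]
  exact (sinh_lt_cosh _).le.trans (by simpa using cosh_le_exp_abs |u|)

lemma integrable_exp_neg_mul_sq_add_mul {b : ℝ} (hb : 0 < b) (c : ℝ) :
    Integrable fun t : ℝ => exp (-b * t ^ 2 + c * t) := by
  refine (integrable_cexp_quadratic (b := (b : ℂ)) (by simpa) c 0).norm.congr
    (ae_of_all _ fun t => ?_)
  simp [Complex.norm_exp, ← Complex.ofReal_pow]

lemma integrable_exp_mul_sub_mul_cosh (p : ℝ) {x : ℝ} (hx : 0 < x) :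
    Integrable fun t => exp (p * t - x * cosh t) := by
  refine (integrable_exp_neg_mul_sq_add_mul (by positivity : 0 < x / 4) p).mono' (by fun_prop)
    (ae_of_all _ fun t => ?_)
  rw [norm_of_nonneg (exp_nonneg _)]
  gcongr
  nlinarith [sq_div_four_le_cosh t]

lemma integrable_besselK_integrand (ν : ℝ) {x : ℝ} (hx : 0 < x) :
    Integrable fun t => exp (-(x * cosh t)) * cosh (ν * t) := by
  refine (((integrable_exp_mul_sub_mul_cosh ν hx).add
    (integrable_exp_mul_sub_mul_cosh (-ν) hx)).div_const 2).congr (ae_of_all _ fun t => ?_)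
  simp only [Pi.add_apply, cosh_eq (ν * t), sub_eq_add_neg, exp_add, neg_mul]
  ring

lemma besselK_nonneg (ν x : ℝ) : 0 ≤ besselK ν x :=
  integral_nonneg fun _ => mul_nonneg (exp_nonneg _) (cosh_pos _).le

lemma cosh_mul_besselK_integrand (ν x t : ℝ) :
    cosh t * (exp (-(x * cosh t)) * cosh (ν * t)) =
      (exp (-(x * cosh t)) * cosh ((ν + 1) * t) +
        exp (-(x * cosh t)) * cosh ((ν - 1) * t)) / 2 := by
  rw [add_mul, sub_mul, one_mul, cosh_add, cosh_sub]
  ring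

lemma sinh_mul_besselK_integrand (ν x t : ℝ) :
    sinh t * (exp (-(x * cosh t)) * sinh (ν * t)) =
      (exp (-(x * cosh t)) * cosh ((ν + 1) * t) -
        exp (-(x * cosh t)) * cosh ((ν - 1) * t)) / 2 := by
  rw [add_mul, sub_mul, one_mul, cosh_add, cosh_sub]
  ring

theorem hasDerivAt_besselK (ν : ℝ) {x : ℝ} (hx : 0 < x) :
    HasDerivAt (besselK ν) (-((besselK (ν + 1) x + besselK (ν - 1) x) / 2)) x := by
  have hint := fun ν => (integrable_besselK_integrand ν hx).integrableOn (s := Ioi 0)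
  have key := hasDerivAt_integral_of_dominated_loc_of_deriv_le (μ := volume.restrict (Ioi 0))
    (F := fun y t => exp (-(y * cosh t)) * cosh (ν * t))
    (F' := fun y t => -(cosh t * (exp (-(y * cosh t)) * cosh (ν * t))))
    (bound := fun t => cosh t * (exp (-(x / 2 * cosh t)) * cosh (ν * t)))
    (Metric.ball_mem_nhds x (half_pos hx)) (.of_forall fun y => by fun_prop)
    (hint ν) (by fun_prop) ?_ ?_ ?_
  · refine HasDerivAt.congr_deriv (f := besselK ν) key.2 ?_
    simp_rw [integral_neg, cosh_mul_besselK_integrand]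
    rw [integral_div, integral_add (hint _) (hint _)]
    rfl
  · refine ae_of_all _ fun t y hball => ?_
    have hy : x / 2 < y := by
      have := abs_lt.1 (mem_ball_iff_norm.1 hball); linarith
    rw [norm_neg, norm_of_nonneg (by positivity)]
    gcongr
  · refine ((((integrable_besselK_integrand (ν + 1) (half_pos hx)).add
      (integrable_besselK_integrand (ν - 1) (half_pos hx))).div_const 2)).integrableOn.congr_fun
        (fun t _ => ?_) measurableSet_Ioi
    simp only [Pi.add_apply, cosh_mul_besselK_integrand]
  · refine ae_of_all _ fun t y _ => ?_
    exact (((hasDerivAt_id y).mul_const (cosh t)).neg.exp.mul_const _).congr_deriv (by simp; ring)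

lemma tendsto_exp_neg_mul_cosh_mul_sinh (ν : ℝ) {x : ℝ} (hx : 0 < x) :
    Tendsto (fun t => exp (-(x * cosh t)) * sinh (ν * t)) atTop (𝓝 0) := by
  have hquad : Tendsto (fun t : ℝ => t * (|ν| - x / 4 * t)) atTop atBot :=
    tendsto_id.atTop_mul_atBot₀ (tendsto_atBot_add_const_left _ _
      ((tendsto_id.const_mul_atTop_of_neg (by linarith : -(x / 4) < 0)).congr fun t => by simp))
  refine squeeze_zero_norm' ?_ (tendsto_exp_atBot.comp hquad)
  filter_upwards [eventually_ge_atTop 0] with t ht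
  rw [norm_mul, norm_of_nonneg (exp_nonneg _), Function.comp_apply]
  calc exp (-(x * cosh t)) * ‖sinh (ν * t)‖
      ≤ exp (-(x * cosh t)) * exp (|ν| * t) := by
        gcongr
        simpa [abs_mul, abs_of_nonneg ht] using abs_sinh_le_exp_abs (ν * t)
    _ ≤ exp (t * (|ν| - x / 4 * t)) := by
        rw [← exp_add]
        gcongr
        nlinarith [sq_div_four_le_cosh t]

theorem besselK_add_one_sub_besselK_sub_one (ν : ℝ) {x : ℝ} (hx : 0 < x) :
    besselK (ν + 1) x - besselK (ν - 1) x = 2 * ν / x * besselK ν x := by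
  have hint := fun ν => (integrable_besselK_integrand ν hx).integrableOn (s := Ioi 0)
  have hderiv : ∀ t, HasDerivAt (fun t => exp (-(x * cosh t)) * sinh (ν * t))
      (ν * (exp (-(x * cosh t)) * cosh (ν * t)) - x / 2 * (exp (-(x * cosh t)) *
        cosh ((ν + 1) * t) - exp (-(x * cosh t)) * cosh ((ν - 1) * t))) t := fun t => by
    have := ((hasDerivAt_cosh t).const_mul x).neg.exp.mul
      ((hasDerivAt_sinh _).comp t ((hasDerivAt_id t).const_mul ν))
    refine this.congr_deriv ?_
    simp only [id, Function.comp, Pi.neg_apply]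
    linear_combination (-x) * sinh_mul_besselK_integrand ν x t
  have hsub : IntegrableOn (fun t => exp (-(x * cosh t)) * cosh ((ν + 1) * t) -
      exp (-(x * cosh t)) * cosh ((ν - 1) * t)) (Ioi 0) := (hint _).sub (hint _)
  have hFTC := integral_Ioi_of_hasDerivAt_of_tendsto (by fun_prop) (fun t _ => hderiv t)
    (((hint ν).const_mul ν).sub (hsub.const_mul (x / 2)))
    (tendsto_exp_neg_mul_cosh_mul_sinh ν hx)
  rw [integral_sub ((hint ν).const_mul ν) (hsub.const_mul (x / 2)),
    integral_const_mul, integral_const_mul, integral_sub (hint _) (hint _)] at hFTC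
  simp only [mul_zero, sinh_zero, sub_zero] at hFTC
  change ν * besselK ν x - x / 2 * (besselK (ν + 1) x - besselK (ν - 1) x) = _ at hFTC
  field_simp
  linarith

theorem hasDerivAt_besselK_of_sub (ν : ℝ) {x : ℝ} (hx : 0 < x) :
    HasDerivAt (besselK ν) (ν / x * besselK ν x - besselK (ν + 1) x) x := by
  convert hasDerivAt_besselK ν hx using 1
  have := besselK_add_one_sub_besselK_sub_one ν hx
  field_simp at this ⊢
  linarith

theorem hasDerivAt_besselK_add_one (ν : ℝ) {x : ℝ} (hx : 0 < x) :
    HasDerivAt (besselK (ν + 1)) (-besselK ν x - (ν + 1) / x * besselK (ν + 1) x) x := by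
  convert hasDerivAt_besselK (ν + 1) hx using 1
  have := besselK_add_one_sub_besselK_sub_one (ν + 1) hx
  rw [add_sub_cancel_right] at this ⊢
  field_simp at this ⊢
  linarith

theorem besselK_le_exp_sub_mul (ν : ℝ) {x₀ x : ℝ} (hx₀ : 0 < x₀) (hx : x₀ ≤ x) :
    besselK ν x ≤ exp (x₀ - x) * besselK ν x₀ := by
  rw [besselK, besselK, ← integral_const_mul]
  refine integral_mono (integrable_besselK_integrand ν (hx₀.trans_le hx)).integrableOn
    ((integrable_besselK_integrand ν hx₀).integrableOn.const_mul _) fun t => ?_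
  rw [← mul_assoc, ← exp_add]
  gcongr
  nlinarith [one_le_cosh t]

noncomputable def besselITerm (ν y : ℝ) (k : ℕ) : ℝ :=
  (y / 2) ^ (2 * (k : ℝ) + ν) / ((k.factorial : ℝ) * Gamma ((k : ℝ) + ν + 1))

section besselI

variable {ν y : ℝ}

lemma besselI_eq_tsum (ν y : ℝ) : besselI ν y = ∑' k, besselITerm ν y k := rfl

lemma natCast_add_add_one_pos (hν : 0 ≤ ν) (k : ℕ) : 0 < (k : ℝ) + ν + 1 := by
  linarith [k.cast_nonneg (α := ℝ)]

lemma factorial_mul_Gamma_le_Gamma (hν : 0 ≤ ν) (k : ℕ) :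
    (k.factorial : ℝ) * Gamma (ν + 1) ≤ Gamma (k + ν + 1) := by
  induction k with
  | zero => simp
  | succ k ih =>
    have hk := natCast_add_add_one_pos hν k
    rw [Nat.factorial_succ, Nat.cast_mul, Nat.cast_succ, add_right_comm (k : ℝ) 1,
      add_right_comm _ 1, Gamma_add_one hk.ne', mul_assoc]
    exact mul_le_mul (by linarith) ih (by positivity) hk.le

lemma besselITerm_nonneg (hν : 0 ≤ ν) (hy : 0 ≤ y) (k : ℕ) : 0 ≤ besselITerm ν y k := by
  have := Gamma_pos_of_pos (natCast_add_add_one_pos hν k)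
  unfold besselITerm
  positivity

lemma besselITerm_le (hν : 0 ≤ ν) (hy : 0 < y) (k : ℕ) :
    besselITerm ν y k ≤ (y / 2) ^ ν / Gamma (ν + 1) * ((y / 2) ^ k / k.factorial) ^ 2 := by
  have hΓ := Gamma_pos_of_pos (by positivity : 0 < ν + 1)
  have hpow : (y / 2) ^ (2 * (k : ℝ) + ν) = ((y / 2) ^ k) ^ 2 * (y / 2) ^ ν := by
    rw [rpow_add (by positivity), ← pow_mul, mul_comm k,
      show (2 : ℝ) * k = ((2 * k : ℕ) : ℝ) by push_cast; ring, rpow_natCast]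
  rw [besselITerm, hpow]
  calc ((y / 2) ^ k) ^ 2 * (y / 2) ^ ν / ((k.factorial : ℝ) * Gamma (k + ν + 1))
      ≤ ((y / 2) ^ k) ^ 2 * (y / 2) ^ ν /
          ((k.factorial : ℝ) * ((k.factorial : ℝ) * Gamma (ν + 1))) := by
        gcongr
        exact factorial_mul_Gamma_le_Gamma hν k
    _ = _ := by field_simp

lemma summable_besselITerm (hν : 0 ≤ ν) (hy : 0 < y) : Summable (besselITerm ν y) := by
  refine .of_nonneg_of_le (besselITerm_nonneg hν hy.le) (besselITerm_le hν hy) (.mul_left _ ?_)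
  refine .of_nonneg_of_le (fun k => by positivity) (fun k => ?_)
    ((summable_pow_div_factorial (y / 2)).mul_left (exp (y / 2)))
  rw [sq]
  exact mul_le_mul_of_nonneg_right (pow_div_factorial_le_exp _ (by positivity) k) (by positivity)

lemma besselI_nonneg (hν : 0 ≤ ν) (hy : 0 ≤ y) : 0 ≤ besselI ν y :=
  tsum_nonneg (besselITerm_nonneg hν hy)

lemma besselI_le (hν : 0 ≤ ν) (hy : 0 < y) :
    besselI ν y ≤ (y / 2) ^ ν / Gamma (ν + 1) * exp y := by
  set C := (y / 2) ^ ν / Gamma (ν + 1)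
  have hC : 0 ≤ C := div_nonneg (by positivity) (Gamma_pos_of_pos (by linarith)).le
  have hexp : ∑' k : ℕ, (y / 2) ^ k / k.factorial ≤ exp (y / 2) :=
    tsum_le_of_sum_range_le (fun k => by positivity) fun n => sum_le_exp_of_nonneg (by positivity) n
  calc besselI ν y
      ≤ ∑' k : ℕ, C * exp (y / 2) * ((y / 2) ^ k / k.factorial) := by
        refine (summable_besselITerm hν hy).tsum_le_tsum (fun k => ?_)
          ((summable_pow_div_factorial _).mul_left _)
        refine (besselITerm_le hν hy k).trans ?_
        rw [sq, mul_assoc C]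
        gcongr
        exact pow_div_factorial_le_exp _ (by positivity) k
    _ ≤ C * exp (y / 2) * exp (y / 2) := by
        rw [tsum_mul_left]
        gcongr
    _ = C * exp y := by rw [mul_assoc, ← exp_add, add_halves]

lemma hasDerivAt_besselITerm (ν : ℝ) (hy : 0 < y) (k : ℕ) :
    HasDerivAt (fun y => besselITerm ν y k) ((2 * k + ν) / y * besselITerm ν y k) y := by
  have := (((hasDerivAt_id y).div_const 2).rpow_const (p := 2 * (k : ℝ) + ν)
    (Or.inl (by simp [hy.ne']))).div_const ((k.factorial : ℝ) * Gamma (k + ν + 1))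
  refine this.congr_deriv ?_
  rw [besselITerm, id, rpow_sub_one (by positivity)]
  field_simp

lemma besselITerm_mono (hν : 0 ≤ ν) (hy : 0 < y) {y' : ℝ} (h : y ≤ y') (k : ℕ) :
    besselITerm ν y k ≤ besselITerm ν y' k := by
  have := Gamma_pos_of_pos (natCast_add_add_one_pos hν k)
  unfold besselITerm
  gcongr

lemma besselITerm_succ (ν : ℝ) (hy : 0 < y) (k : ℕ) :
    2 * ((k + 1 : ℕ) : ℝ) / y * besselITerm ν y (k + 1) = besselITerm (ν + 1) y k := by
  have hΓ : Gamma ((k + 1 : ℕ) + ν + 1) = Gamma (k + (ν + 1) + 1) := by push_cast; ring_nf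
  have hpow : (y / 2) ^ (2 * ((k + 1 : ℕ) : ℝ) + ν) =
      (y / 2) ^ (2 * (k : ℝ) + (ν + 1)) * (y / 2) := by
    rw [← rpow_add_one (by positivity)]; push_cast; ring_nf
  rw [besselITerm, besselITerm, hΓ, hpow, Nat.factorial_succ]
  push_cast
  field_simp

lemma besselITerm_add_one (hν : 0 ≤ ν) (hy : 0 < y) (k : ℕ) :
    2 * (k + ν + 1) / y * besselITerm (ν + 1) y k = besselITerm ν y k := by
  have hk := natCast_add_add_one_pos hν k
  have hΓ : Gamma (k + (ν + 1) + 1) = (k + ν + 1) * Gamma (k + ν + 1) := by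
    rw [← add_assoc, Gamma_add_one hk.ne']
  have hpow : (y / 2) ^ (2 * (k : ℝ) + (ν + 1)) = (y / 2) ^ (2 * (k : ℝ) + ν) * (y / 2) := by
    rw [← add_assoc, rpow_add_one (by positivity)]
  rw [besselITerm, besselITerm, hΓ, hpow]
  field_simp

lemma hasSum_two_mul_div_mul_besselITerm (hν : 0 ≤ ν) (hy : 0 < y) :
    HasSum (fun k : ℕ => 2 * k / y * besselITerm ν y k) (besselI (ν + 1) y) := by
  refine (hasSum_nat_add_iff' 1).mp ?_
  simp only [Finset.sum_range_one, Nat.cast_zero, mul_zero, zero_div, zero_mul, sub_zero]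
  rw [funext (besselITerm_succ ν hy)]
  exact (summable_besselITerm (by linarith) hy).hasSum

lemma summable_mul_besselITerm (hν : 0 ≤ ν) (hy : 0 < y) :
    Summable fun k : ℕ => (2 * k + ν) / y * besselITerm ν y k := by
  refine (((summable_besselITerm hν hy).mul_left (ν / y)).add
    (hasSum_two_mul_div_mul_besselITerm hν hy).summable).congr fun k => ?_
  ring

lemma hasDerivAt_besselI_tsum (hν : 0 ≤ ν) (hy : 0 < y) :
    HasDerivAt (besselI ν) (∑' k : ℕ, (2 * k + ν) / y * besselITerm ν y k) y := by
  have hmem : y ∈ Ioo (y / 2) (2 * y) := ⟨by linarith, by linarith⟩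
  refine hasDerivAt_tsum_of_isPreconnected (g := fun k z => besselITerm ν z k)
    ((summable_mul_besselITerm hν (by linarith : 0 < 2 * y)).mul_left 4) isOpen_Ioo
    isPreconnected_Ioo (fun k z hz => hasDerivAt_besselITerm ν (by linarith [hz.1]) k)
    (fun k z hz => ?_) hmem (summable_besselITerm hν hy) hmem
  have hz0 : 0 < z := by linarith [hz.1]
  have hk : 0 ≤ 2 * (k : ℝ) + ν := by positivity
  rw [norm_of_nonneg (mul_nonneg (div_nonneg hk hz0.le) (besselITerm_nonneg hν hz0.le k))]
  calc (2 * k + ν) / z * besselITerm ν z k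
      ≤ (2 * k + ν) / (y / 2) * besselITerm ν (2 * y) k := by
        gcongr
        · exact besselITerm_nonneg hν (by linarith) k
        · exact hz.1.le
        · exact besselITerm_mono hν hz0 hz.2.le k
    _ = 4 * ((2 * k + ν) / (2 * y) * besselITerm ν (2 * y) k) := by
        field_simp; ring

theorem hasDerivAt_besselI (hν : 0 ≤ ν) (hy : 0 < y) :
    HasDerivAt (besselI ν) (besselI (ν + 1) y + ν / y * besselI ν y) y := by
  refine (hasDerivAt_besselI_tsum hν hy).congr_deriv ?_
  rw [← (hasSum_two_mul_div_mul_besselITerm hν hy).tsum_eq, besselI_eq_tsum, ← tsum_mul_left,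
    ← Summable.tsum_add (hasSum_two_mul_div_mul_besselITerm hν hy).summable
      ((summable_besselITerm hν hy).mul_left _)]
  congr 1 with k
  ring

theorem hasDerivAt_besselI_add_one (hν : 0 ≤ ν) (hy : 0 < y) :
    HasDerivAt (besselI (ν + 1)) (besselI ν y - (ν + 1) / y * besselI (ν + 1) y) y := by
  have hν' : 0 ≤ ν + 1 := by linarith
  refine (hasDerivAt_besselI_tsum hν' hy).congr_deriv ?_
  rw [besselI_eq_tsum, besselI_eq_tsum, ← tsum_mul_left,
    ← Summable.tsum_sub (summable_besselITerm hν hy)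
      ((summable_besselITerm hν' hy).mul_left _)]
  congr 1 with k
  rw [← besselITerm_add_one hν hy k]
  ring

end besselI

theorem tendsto_mul_besselI_mul_besselK_atTop {ν a b : ℝ} (ν' : ℝ) (hν : 0 ≤ ν)
    (ha : 0 < a) (hab : a < b) :
    Tendsto (fun x => x * besselI ν (a * x) * besselK ν' (b * x)) atTop (𝓝 0) := by
  have hb := ha.trans hab
  set C := (a / 2) ^ ν / Gamma (ν + 1) * (exp b * besselK ν' b) with hC
  have hlim :=
    (tendsto_rpow_mul_exp_neg_mul_atTop_nhds_zero (ν + 1) (b - a) (by linarith)).const_mul C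
  rw [mul_zero] at hlim
  refine squeeze_zero' ?_ ?_ hlim
  · filter_upwards [eventually_gt_atTop 0] with x hx
    exact mul_nonneg (mul_nonneg hx.le (besselI_nonneg hν (by positivity))) (besselK_nonneg _ _)
  · filter_upwards [eventually_ge_atTop 1] with x hx
    have hx0 : 0 < x := by linarith
    calc x * besselI ν (a * x) * besselK ν' (b * x)
        ≤ x * ((a * x / 2) ^ ν / Gamma (ν + 1) * exp (a * x)) *
            (exp (b - b * x) * besselK ν' b) := by
          gcongr
          · exact besselK_nonneg _ _
          · exact besselI_le hν (by positivity)
          · exact besselK_le_exp_sub_mul ν' hb (by nlinarith)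
      _ = C * (x ^ (ν + 1) * exp (-(b - a) * x)) := by
          rw [show a * x / 2 = a / 2 * x by ring, mul_rpow (by positivity) hx0.le,
            rpow_add_one hx0.ne', exp_sub, show -(b - a) * x = a * x - b * x by ring, exp_sub, hC]
          field_simp

noncomputable def lommelIK (μ a b x : ℝ) : ℝ :=
  x * (a * besselI (μ + 1) (a * x) * besselK μ (b * x) +
    b * besselI μ (a * x) * besselK (μ + 1) (b * x))

section lommelIK

variable {μ a b x : ℝ}

theorem hasDerivAt_lommelIK (hμ : 0 ≤ μ) (ha : 0 < a) (hb : 0 < b) (hx : 0 < x) :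
    HasDerivAt (lommelIK μ a b)
      ((a ^ 2 - b ^ 2) * (x * besselI μ (a * x) * besselK μ (b * x))) x := by
  have hax : 0 < a * x := by positivity
  have hbx : 0 < b * x := by positivity
  have hI := (hasDerivAt_besselI hμ hax).comp x ((hasDerivAt_id x).const_mul a)
  have hI₁ := (hasDerivAt_besselI_add_one hμ hax).comp x ((hasDerivAt_id x).const_mul a)
  have hK := (hasDerivAt_besselK_of_sub μ hbx).comp x ((hasDerivAt_id x).const_mul b)
  have hK₁ := (hasDerivAt_besselK_add_one μ hbx).comp x ((hasDerivAt_id x).const_mul b)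
  refine ((hasDerivAt_id x).mul
    (((hI₁.const_mul a).mul hK).add ((hI.const_mul b).mul hK₁))).congr_deriv ?_
  simp only [id, Function.comp_apply, Pi.mul_apply, Pi.add_apply, mul_one]
  field_simp
  ring

theorem tendsto_lommelIK_atTop (hμ : 0 ≤ μ) (ha : 0 < a) (hab : a < b) :
    Tendsto (lommelIK μ a b) atTop (𝓝 0) := by
  have h₁ := tendsto_mul_besselI_mul_besselK_atTop μ (by linarith : 0 ≤ μ + 1) ha hab
  have h₂ := tendsto_mul_besselI_mul_besselK_atTop (μ + 1) hμ ha hab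
  have := (h₁.const_mul a).add (h₂.const_mul b)
  rw [mul_zero, mul_zero, add_zero] at this
  exact this.congr fun x => by rw [lommelIK]; ring

end lommelIK

/-- Lemma 3.1: the improper integral `R_μ(a,b;c)` converges and has an explicit value. -/
theorem bessel_cross_integral (μ a b c : ℝ) (hμ : 0 ≤ μ) (ha : 0 < a) (hab : a < b)
    (hc : 0 < c) :
    MeasureTheory.IntegrableOn (fun x => x * besselI μ (a * x) * besselK μ (b * x))
      (Set.Ioi c) ∧
    (∫ x in Set.Ioi c, x * besselI μ (a * x) * besselK μ (b * x))
      = (a * c * besselI (μ + 1) (a * c) * besselK μ (b * c)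
          + b * c * besselI μ (a * c) * besselK (μ + 1) (b * c)) / (b ^ 2 - a ^ 2) := by
  have hb : 0 < b := ha.trans hab
  have hD : b ^ 2 - a ^ 2 ≠ 0 := by nlinarith
  set G := fun x => -(lommelIK μ a b x / (b ^ 2 - a ^ 2))
  have hG : ∀ x ∈ Ioi c, HasDerivAt G (x * besselI μ (a * x) * besselK μ (b * x)) x :=
    fun x hx => ((hasDerivAt_lommelIK hμ ha hb (hc.trans hx)).div_const _).neg.congr_deriv
      (by field_simp; ring)
  have hcont : ContinuousWithinAt G (Ici c) c :=
    ((hasDerivAt_lommelIK hμ ha hb hc).continuousAt.div_const _).neg.continuousWithinAt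
  have hnonneg : ∀ x ∈ Ioi c, 0 ≤ x * besselI μ (a * x) * besselK μ (b * x) := fun x hx =>
    mul_nonneg (mul_nonneg (hc.trans hx).le (besselI_nonneg hμ (mul_pos ha (hc.trans hx)).le))
      (besselK_nonneg _ _)
  have hlim : Tendsto G atTop (𝓝 0) := by
    simpa using ((tendsto_lommelIK_atTop hμ ha hab).div_const (b ^ 2 - a ^ 2)).neg
  refine ⟨integrableOn_Ioi_deriv_of_nonneg hcont hG hnonneg hlim, ?_⟩
  rw [integral_Ioi_of_hasDerivAt_of_nonneg hcont hG hnonneg hlim]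
  simp only [G, lommelIK]
  ring
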